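/- Let K be an at most countable set of m×n real matrices with m > n such that rank(A_i − A_j) = n for all distinct A_i, A_j ∈ K. Then there exists a matrix F ∈ M^{n×m} such that rank(F·A_i − F·A_j) = n for all distinct A_i, A_j ∈ K. -/
import Mathlib

open Polynomial Matrix

private lemma det_isUnit_of_rank_eq {n : ℕ} (M : Matrix (Fin n) (Fin n) ℝ)
    (h : M.rank = n) : IsUnit M.det := by
  by_contra hu
  rw [isUnit_iff_ne_zero, not_not] at hu
  obtain ⟨v, hv, hMv⟩ := (Matrix.exists_mulVec_eq_zero_iff).mpr hu
  have hker : v ∈ LinearMap.ker M.mulVecLin := by simpa using hMv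
  have h1 : 0 < Module.finrank ℝ (LinearMap.ker M.mulVecLin) := by
    rw [Module.finrank_pos_iff_exists_ne_zero]
    exact ⟨⟨v, hker⟩, by simpa using hv⟩
  have h2 := LinearMap.finrank_range_add_finrank_ker M.mulVecLin
  rw [Module.finrank_fintype_fun_eq_card, Fintype.card_fin] at h2
  have : M.rank = Module.finrank ℝ (LinearMap.range M.mulVecLin) := rfl
  omega

private lemma good_open {m n : ℕ} (B : Matrix (Fin m) (Fin n) ℝ) :
    IsOpen {F : Fin n → Fin m → ℝ | (Matrix.of F * B).det ≠ 0} := by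
  have hc : Continuous fun F : Fin n → Fin m → ℝ => (Matrix.of F * B).det := by
    exact Continuous.matrix_det (Continuous.matrix_mul continuous_id continuous_const)
  exact isOpen_ne.preimage hc

private lemma good_dense {m n : ℕ} (B : Matrix (Fin m) (Fin n) ℝ) (hB : B.rank = n) :
    Dense {F : Fin n → Fin m → ℝ | (Matrix.of F * B).det ≠ 0} := by
  rw [Metric.dense_iff]
  intro F0 r hr
  set Δ : Fin n → Fin m → ℝ := (fun i j => Bᵀ i j) - F0 with hΔ
  set p : Polynomial ℝ := Matrix.det (Matrix.of fun i j =>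
    Polynomial.C ((Matrix.of F0 * B) i j) + Polynomial.X * Polynomial.C ((Matrix.of Δ * B) i j))
    with hp
  have heval : ∀ t : ℝ, Polynomial.eval t p = ((Matrix.of (F0 + t • Δ)) * B).det := by
    intro t
    rw [hp, ← Polynomial.coe_evalRingHom, RingHom.map_det]
    congr 1
    ext i j
    simp only [RingHom.mapMatrix_apply, Matrix.map_apply, Matrix.of_apply, map_add, _root_.map_mul,
      Polynomial.coe_evalRingHom, Polynomial.eval_C, Polynomial.eval_X, Polynomial.eval_mul,
      Polynomial.eval_add, Matrix.add_mul, Matrix.smul_mul, Matrix.add_apply, Matrix.smul_apply,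
      smul_eq_mul]
    have hsplit : Matrix.of (F0 + t • Δ) = Matrix.of F0 + t • Matrix.of Δ := rfl
    rw [hsplit, Matrix.add_mul, Matrix.smul_mul, Matrix.add_apply, Matrix.smul_apply, smul_eq_mul]
  have hBtB : (Bᵀ * B).det ≠ 0 := by
    have : (Bᵀ * B).rank = n := by rw [Matrix.rank_transpose_mul_self, hB]
    exact (det_isUnit_of_rank_eq _ this).ne_zero
  have hp0 : p ≠ 0 := by
    intro h0
    apply hBtB
    have := heval 1
    rw [h0, Polynomial.eval_zero] at this
    have h1 : Matrix.of (F0 + (1:ℝ) • Δ) = Bᵀ := by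
      ext i j; simp [hΔ]
    rw [h1] at this
    exact this.symm
  have hfin : {t : ℝ | p.IsRoot t}.Finite := p.finite_setOf_isRoot hp0
  have hδ : 0 < r / (‖Δ‖ + 1) := by positivity
  obtain ⟨t, htI, htr⟩ := ((Set.Ioo_infinite hδ).diff hfin).nonempty
  refine ⟨F0 + t • Δ, ?_, ?_⟩
  · rw [Metric.mem_ball, dist_eq_norm, add_sub_cancel_left, norm_smul]
    calc ‖t‖ * ‖Δ‖ ≤ t * (‖Δ‖ + 1) := by
          rw [Real.norm_eq_abs, abs_of_pos htI.1]
          nlinarith [norm_nonneg Δ, htI.1]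
      _ < r := (lt_div_iff₀ (by positivity)).mp htI.2
  · simp only [Set.mem_setOf_eq]
    rw [← heval t]
    exact htr


/-- For an at most countable set `K` of real `m × n` matrices with `m > n`
such that `rank (A - A') = n` for all distinct `A, A' ∈ K`, there exists an `n × m`
matrix `F` with `rank (F * A - F * A') = n` for all distinct `A, A' ∈ K`. -/
theorem stmt0 {m n : ℕ} (hmn : n < m)
    (K : Set (Matrix (Fin m) (Fin n) ℝ)) (hK : K.Countable)
    (hrank : ∀ A ∈ K, ∀ A' ∈ K, A ≠ A' → (A - A').rank = n) :
    ∃ F : Matrix (Fin n) (Fin m) ℝ,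
      ∀ A ∈ K, ∀ A' ∈ K, A ≠ A' → (F * A - F * A').rank = n := by
  classical
  set T : Set (Matrix (Fin m) (Fin n) ℝ × Matrix (Fin m) (Fin n) ℝ) :=
    {p | p.1 ∈ K ∧ p.2 ∈ K ∧ p.1 ≠ p.2} with hT
  have hTc : T.Countable := (hK.prod hK).mono (fun p hp => Set.mem_prod.mpr ⟨hp.1, hp.2.1⟩)
  have := hTc.to_subtype
  set G : T → Set (Fin n → Fin m → ℝ) :=
    fun p => {F | (Matrix.of F * (p.1.1 - p.1.2)).det ≠ 0} with hG
  have hdense : Dense (⋂ p : T, G p) := by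
    apply dense_iInter_of_isOpen
    · intro p; exact good_open _
    · rintro ⟨⟨A, A'⟩, hA, hA', hne⟩
      exact good_dense _ (hrank A hA A' hA' hne)
  obtain ⟨F, hF⟩ := hdense.nonempty
  refine ⟨Matrix.of F, fun A hA A' hA' hne => ?_⟩
  have hmem := Set.mem_iInter.mp hF ⟨(A, A'), hA, hA', hne⟩
  have hdet : (Matrix.of F * (A - A')).det ≠ 0 := hmem
  rw [← Matrix.mul_sub]
  rw [Matrix.rank_of_isUnit _ ((Matrix.isUnit_iff_isUnit_det _).mpr (isUnit_iff_ne_zero.mpr hdet)),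
    Fintype.card_fin]
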